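/- arXiv:2010.11355 — 4 statements merged into one kernel-verified Lean document; each statement's English description precedes it below -/
import Mathlib

section
/- For every positive integer M, G₀(M) = Γ₀(M)·G₀(M)_{i∞}; equivalently, every matrix A ∈ G₀(M) can be written as A = γ·B where γ ∈ Γ₀(M) and B ∈ G₀(M) is upper triangular (i.e. B has lower-left entry 0). -/
/-!
Since `det A` is a unit of `ℤ_(M)` and `A₁₀ ∈ M·ℤ_(M)`, the entry `A₀₀` is a unit modulo `M`, so its
numerator is prime to `M`. Hence the first column of `A` is a rational multiple of a primitive
integral vector `(a, c)` with `M ∣ c`, which is the first column of some `γ ∈ Γ₀(M)`. Then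
`B = γ⁻¹ A = adj(γ) A` lies in `G₀(M)`, which is closed under products, and `B₁₀ = 0`.
-/

/-- `x ∈ ℤ_(M)`, i.e. `x = a/b` with `a, b ∈ ℤ` and `gcd(b, M) = 1`. -/
def inZM (M : ℕ) (x : ℚ) : Prop :=
  ∃ a b : ℤ, Int.gcd b M = 1 ∧ x = a / b

/-- `G₀(M) ⊆ GL₂(ℤ_(M))`: matrices with entries in `ℤ_(M)`, determinant a unit of `ℤ_(M)`,
and lower-left entry in `M·ℤ_(M)`. -/
def G0 (M : ℕ) : Set (Matrix (Fin 2) (Fin 2) ℚ) :=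
  {γ | (∀ i j, inZM M (γ i j)) ∧ (∃ y : ℚ, inZM M y ∧ γ.det * y = 1) ∧
       (∃ x : ℚ, inZM M x ∧ γ 1 0 = M * x)}

/-- `Γ₀(M)` viewed as a set of rational matrices: integral matrices of determinant one whose
lower-left entry is divisible by `M`. -/
def Gamma0Q (M : ℕ) : Set (Matrix (Fin 2) (Fin 2) ℚ) :=
  {γ | ∃ a b c d : ℤ, γ = !![(a : ℚ), b; c, d] ∧ a * d - b * c = 1 ∧ (M : ℤ) ∣ c}

lemma inZM_iff_isCoprime_den {M : ℕ} {x : ℚ} : inZM M x ↔ IsCoprime (x.den : ℤ) M := by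
  constructor
  · rintro ⟨a, b, hb, rfl⟩
    rw [← Rat.divInt_eq_div]
    exact (Int.isCoprime_iff_gcd_eq_one.2 hb).of_isCoprime_of_dvd_left (Rat.den_dvd a b)
  · intro h
    exact ⟨x.num, x.den, Int.isCoprime_iff_gcd_eq_one.1 h, (Rat.num_div_den x).symm⟩

lemma inZM_of_den_dvd {M : ℕ} {x : ℚ} {n : ℕ} (hn : IsCoprime (n : ℤ) M) (hx : x.den ∣ n) :
    inZM M x :=
  inZM_iff_isCoprime_den.2 <| hn.of_isCoprime_of_dvd_left <| Int.natCast_dvd_natCast.2 hx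

/-- `ℤ_(M)`. -/
def zLoc (M : ℕ) : Subring ℚ where
  carrier := {x | inZM M x}
  zero_mem' := inZM_of_den_dvd (n := 1) isCoprime_one_left (by simp)
  one_mem' := inZM_of_den_dvd (n := 1) isCoprime_one_left (by simp)
  add_mem' {x y} (hx : inZM M x) (hy : inZM M y) := by
    rw [inZM_iff_isCoprime_den] at hx hy
    exact inZM_of_den_dvd (by push_cast; exact hx.mul_left hy) (Rat.add_den_dvd x y)
  mul_mem' {x y} (hx : inZM M x) (hy : inZM M y) := by
    rw [inZM_iff_isCoprime_den] at hx hy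
    exact inZM_of_den_dvd (by push_cast; exact hx.mul_left hy) (Rat.mul_den_dvd x y)
  neg_mem' {x} (hx : inZM M x) := by
    rwa [Set.mem_ofPred_eq, inZM_iff_isCoprime_den, Rat.neg_den, ← inZM_iff_isCoprime_den]

lemma isCoprime_num_of_mul_eq_one_add {M : ℕ} {x y z : ℚ} (hx : inZM M x) (hy : inZM M y)
    (hz : inZM M z) (h : x * y = 1 + M * z) : IsCoprime x.num M := by
  rw [inZM_iff_isCoprime_den] at hx hy hz
  have hcleared : x.num * y.num * z.den = x.den * y.den * z.den + M * (z.num * x.den * y.den) := by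
    have : (x.num * y.num * z.den : ℚ) = x.den * y.den * z.den + M * (z.num * x.den * y.den) := by
      rw [← x.mul_den_eq_num, ← y.mul_den_eq_num, ← z.mul_den_eq_num]
      linear_combination (x.den * y.den * z.den : ℚ) * h
    exact_mod_cast this
  have hrhs := ((hx.mul_left hy).mul_left hz).add_mul_left_left (z.num * x.den * y.den)
  rw [← hcleared] at hrhs
  exact hrhs.of_mul_left_left.of_mul_left_left

lemma isCoprime_num_of_mem_G0 {M : ℕ} {A : Matrix (Fin 2) (Fin 2) ℚ} (hA : A ∈ G0 M) :
    IsCoprime (A 0 0).num M := by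
  obtain ⟨hentries, ⟨y, hy, hdet⟩, x, hx, hA10⟩ := hA
  refine isCoprime_num_of_mul_eq_one_add (hentries 0 0) ((zLoc M).mul_mem (hentries 1 1) hy)
    ((zLoc M).mul_mem ((zLoc M).mul_mem hx (hentries 0 1)) hy) ?_
  rw [Matrix.det_fin_two, hA10] at hdet
  linear_combination hdet

lemma mul_mem_G0 {M : ℕ} {A B : Matrix (Fin 2) (Fin 2) ℚ} (hA : A ∈ G0 M) (hB : B ∈ G0 M) :
    A * B ∈ G0 M := by
  obtain ⟨hA, ⟨y, hy, hdetA⟩, x, hx, hA10⟩ := hA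
  obtain ⟨hB, ⟨y', hy', hdetB⟩, x', hx', hB10⟩ := hB
  refine ⟨fun i j => ?_, ⟨y * y', (zLoc M).mul_mem hy hy', ?_⟩,
    x * B 0 0 + A 1 1 * x', ?_, ?_⟩
  · rw [Matrix.mul_apply]
    exact (zLoc M).sum_mem fun k _ => (zLoc M).mul_mem (hA i k) (hB k j)
  · rw [Matrix.det_mul]
    linear_combination A.det * y * hdetB + hdetA
  · exact (zLoc M).add_mem ((zLoc M).mul_mem hx (hB 0 0)) ((zLoc M).mul_mem (hA 1 1) hx')
  · rw [Matrix.mul_apply, Fin.sum_univ_two, hA10, hB10]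
    ring

lemma Gamma0Q_subset_G0 (M : ℕ) : Gamma0Q M ⊆ G0 M := by
  rintro _ ⟨a, b, c, d, rfl, hdet, k, rfl⟩
  refine ⟨fun i j => ?_, ⟨1, (zLoc M).one_mem, ?_⟩, k, intCast_mem (zLoc M) k, by simp⟩
  · fin_cases i <;> fin_cases j <;> exact intCast_mem (zLoc M) _
  · rw [Matrix.det_fin_two_of]
    exact_mod_cast by linear_combination hdet

lemma adjugate_mem_Gamma0Q {M : ℕ} {γ : Matrix (Fin 2) (Fin 2) ℚ} (hγ : γ ∈ Gamma0Q M) :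
    γ.adjugate ∈ Gamma0Q M := by
  obtain ⟨a, b, c, d, rfl, hdet, hc⟩ := hγ
  exact ⟨d, -b, -c, a, by simp [Matrix.adjugate_fin_two_of], by linear_combination hdet,
    hc.neg_right⟩

lemma mul_adjugate_of_mem_Gamma0Q {M : ℕ} {γ : Matrix (Fin 2) (Fin 2) ℚ} (hγ : γ ∈ Gamma0Q M) :
    γ * γ.adjugate = 1 := by
  obtain ⟨a, b, c, d, rfl, hdet, -⟩ := hγ
  have hdetQ : (a * d - b * c : ℚ) = 1 := by exact_mod_cast hdet
  rw [Matrix.mul_adjugate, Matrix.det_fin_two_of, hdetQ, one_smul]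

/-- The primitive integral vector `(a, M c)`, proportional to the column `(p, M z)`, is the first
column of the matrix `γ ∈ Γ₀(M)` of the factorization. -/
lemma exists_isCoprime_mul_eq_mul {M : ℕ} {p z : ℚ} (hp : IsCoprime p.num M) (hz : inZM M z)
    (hne : p ≠ 0 ∨ z ≠ 0) : ∃ a c : ℤ, IsCoprime a (M * c) ∧ c * p = a * z := by
  rw [inZM_iff_isCoprime_den] at hz
  have hgcd : 0 < Int.gcd (p.num * z.den) (z.num * p.den) := by
    rw [Int.gcd_pos_iff]
    rcases hne with hp0 | hz0
    · exact .inl (mul_ne_zero (Rat.num_ne_zero.2 hp0) (by exact_mod_cast z.den_nz))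
    · exact .inr (mul_ne_zero (Rat.num_ne_zero.2 hz0) (by exact_mod_cast p.den_nz))
  obtain ⟨g, a, c, hg, hac, hu, hv⟩ := Int.exists_gcd_one' hgcd
  refine ⟨a, c, ?_, ?_⟩
  · have haM : IsCoprime a M := (hp.mul_left hz).of_isCoprime_of_dvd_left (Dvd.intro _ hu.symm)
    exact haM.mul_right (Int.isCoprime_iff_gcd_eq_one.2 hac)
  · have hcross : ((z.num * p.den : ℤ) : ℚ) * p = ((p.num * z.den : ℤ) : ℚ) * z := by
      push_cast
      rw [mul_assoc, p.den_mul_eq_num, mul_assoc, z.den_mul_eq_num, mul_comm]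
    rw [hu, hv] at hcross
    push_cast at hcross
    have hg0 : (g : ℚ) ≠ 0 := by exact_mod_cast hg.ne'
    exact mul_right_cancel₀ hg0 (by linear_combination hcross)

theorem G0_eq_Gamma0_mul_stab_general (M : ℕ)
    (A : Matrix (Fin 2) (Fin 2) ℚ) (hA : A ∈ G0 M) :
    ∃ γ ∈ Gamma0Q M, ∃ B ∈ G0 M, B 1 0 = 0 ∧ A = γ * B := by
  obtain ⟨-, ⟨y, -, hdet⟩, z, hz, hA10⟩ := id hA
  have hcol : A 0 0 ≠ 0 ∨ z ≠ 0 := by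
    by_contra! h
    rw [Matrix.det_fin_two, hA10, h.1, h.2] at hdet
    simp at hdet
  obtain ⟨a, c, ⟨d, b, hbezout⟩, hprop⟩ :=
    exists_isCoprime_mul_eq_mul (isCoprime_num_of_mem_G0 hA) hz hcol
  have hγ : !![(a : ℚ), -b; (M * c : ℤ), d] ∈ Gamma0Q M :=
    ⟨a, -b, M * c, d, by simp, by linear_combination hbezout, dvd_mul_right _ _⟩
  refine ⟨_, hγ, _, mul_mem_G0 (Gamma0Q_subset_G0 M (adjugate_mem_Gamma0Q hγ)) hA, ?_, ?_⟩
  · rw [Matrix.adjugate_fin_two_of, Matrix.mul_apply, Fin.sum_univ_two, hA10]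
    simp only [Matrix.of_apply, Matrix.cons_val', Matrix.cons_val_zero, Matrix.cons_val_one,
      Matrix.cons_val_fin_one, Int.cast_mul, Int.cast_natCast]
    linear_combination (-M : ℚ) * hprop
  · rw [← Matrix.mul_assoc, mul_adjugate_of_mem_Gamma0Q hγ, Matrix.one_mul]

/-- `G₀(M) = Γ₀(M) · G₀(M)_{i∞}`: every `A ∈ G₀(M)` factors as `A = γ · B` with
`γ ∈ Γ₀(M)` and `B ∈ G₀(M)` upper triangular. -/
theorem G0_eq_Gamma0_mul_stab (M : ℕ) (hM : 0 < M)
    (A : Matrix (Fin 2) (Fin 2) ℚ) (hA : A ∈ G0 M) :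
    ∃ γ ∈ Gamma0Q M, ∃ B ∈ G0 M, B 1 0 = 0 ∧ A = γ * B :=
  G0_eq_Gamma0_mul_stab_general M A hA
end

section
/- Let M be a positive integer, write M = f²·M₀ with M₀ squarefree, and let m be a positive integer. Set D := gcd(M, m²) and let u, v be integers with gcd(M,m)·m·v − M·u = D. Then the generalized Atkin–Lehner involution W_m^M := (1/√D)·(m, u; M, gcd(M,m)·v) lies in Γ₀^{*,gcd(f,m)}(M). -/
/-- `Γ₀^{*,h}(M)`: the set of matrices `(1/√e)·(e·p, q/h; M·r/h, e·s)` of determinant `1`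
with `e` a positive integer dividing `M/h²` and `p, q, r, s ∈ ℤ`. -/
def GammaStar (M h : ℕ) : Set (Matrix (Fin 2) (Fin 2) ℝ) :=
  {W | W.det = 1 ∧ ∃ (e : ℕ) (p q r s : ℤ), 0 < e ∧ e ∣ M / h ^ 2 ∧
    W = (Real.sqrt e)⁻¹ • !![(e : ℝ) * p, (q : ℝ) / h; (M : ℝ) * r / h, (e : ℝ) * s]}

/-! Write `h = gcd(f, m)` and `D = gcd(M, m²) = h²·e`. Comparing `p`-adic valuations, the
squarefreeness of `M₀` gives `D ∣ h · gcd(M, m)`, so `h·e` divides `gcd(M, m)` and hence `m`.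
Pulling `√D = h·√e` out of `W_m^M` then exhibits it as `(1/√e)·(e·p, u/h; M/h, e·s)` with
`p = m/(h e)` and `s = gcd(M, m)·v/(h e)`. -/

theorem Squarefree.gcd_sq_mul_dvd_gcd_mul_gcd {M₀ : ℕ} (hM₀ : Squarefree M₀) (f m : ℕ) :
    Nat.gcd (f ^ 2 * M₀) (m ^ 2) ∣ Nat.gcd f m * Nat.gcd (f ^ 2 * M₀) m := by
  rcases eq_or_ne f 0 with rfl | hf
  · simp [sq]
  rcases eq_or_ne m 0 with rfl | hm
  · simp
  have hM : f ^ 2 * M₀ ≠ 0 := mul_ne_zero (pow_ne_zero 2 hf) hM₀.ne_zero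
  rw [← Nat.factorization_le_iff_dvd (Nat.gcd_ne_zero_left hM)
    (mul_ne_zero (Nat.gcd_ne_zero_left hf) (Nat.gcd_ne_zero_left hM))]
  intro p
  rw [Nat.factorization_gcd hM (pow_ne_zero 2 hm),
    Nat.factorization_mul (Nat.gcd_ne_zero_left hf) (Nat.gcd_ne_zero_left hM),
    Nat.factorization_gcd hM hm, Nat.factorization_gcd hf hm,
    Nat.factorization_mul (pow_ne_zero 2 hf) hM₀.ne_zero]
  simp only [Nat.factorization_pow, Finsupp.inf_apply, Finsupp.add_apply,
    Finsupp.smul_apply, smul_eq_mul]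
  have := hM₀.natFactorization_le_one p
  omega

theorem Matrix.det_inv_sqrt_smul_eq_one {n : Type*} [Fintype n] [DecidableEq n]
    (hn : Fintype.card n = 2) {D : ℝ} (hD : 0 < D) {A : Matrix n n ℝ} (hA : A.det = D) :
    ((Real.sqrt D)⁻¹ • A).det = 1 := by
  rw [Matrix.det_smul, hn, hA, inv_pow, Real.sq_sqrt hD.le, inv_mul_cancel₀ hD.ne']

theorem inv_sqrt_sq_mul_smul_eq {h e : ℝ} (hh : 0 < h) (he : 0 < e) (p q r s : ℝ) :
    (Real.sqrt (h ^ 2 * e))⁻¹ • !![h * e * p, q; r, h * e * s] =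
      (Real.sqrt e)⁻¹ • !![e * p, q / h; r / h, e * s] := by
  rw [Real.sqrt_mul (sq_nonneg h), Real.sqrt_sq hh.le]
  have : 0 < Real.sqrt e := Real.sqrt_pos.2 he
  ext i j
  fin_cases i <;> fin_cases j <;>
    simp only [Fin.zero_eta, Fin.mk_one, Matrix.smul_apply, Matrix.of_apply, Matrix.cons_val',
      Matrix.cons_val_zero, Matrix.cons_val_one, Matrix.empty_val', Matrix.cons_val_fin_one,
      smul_eq_mul] <;>
    field_simp

theorem genAtkinLehner_mem_GammaStar_general (M M₀ f m : ℕ) (hM : 0 < M)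
    (hMf : M = f ^ 2 * M₀) (hM₀ : Squarefree M₀)
    (u v : ℤ) (huv : (Nat.gcd M m : ℤ) * m * v - (M : ℤ) * u = (Nat.gcd M (m ^ 2) : ℤ)) :
    ((Real.sqrt (Nat.gcd M (m ^ 2)))⁻¹ •
        !![(m : ℝ), (u : ℝ); (M : ℝ), (Nat.gcd M m : ℝ) * v]) ∈ GammaStar M (Nat.gcd f m) := by
  set D := Nat.gcd M (m ^ 2)
  set g := Nat.gcd M m
  set h := Nat.gcd f m
  have hD : 0 < D := Nat.gcd_pos_of_pos_left _ hM
  have hDM : D ∣ M := Nat.gcd_dvd_left M (m ^ 2)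
  have hDhg : D ∣ h * g := by subst hMf; exact hM₀.gcd_sq_mul_dvd_gcd_mul_gcd f m
  have hh2M : h ^ 2 ∣ M := hMf ▸ (pow_dvd_pow_of_dvd (Nat.gcd_dvd_left f m) 2).mul_right M₀
  obtain ⟨e, hDe⟩ : h ^ 2 ∣ D :=
    Nat.dvd_gcd hh2M (pow_dvd_pow_of_dvd (Nat.gcd_dvd_right f m) 2)
  obtain ⟨hh2, he⟩ := CanonicallyOrderedAdd.mul_pos.mp (hDe ▸ hD)
  have hh : 0 < h := (Nat.pow_pos_iff.mp hh2).resolve_right two_ne_zero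
  obtain ⟨s, hs⟩ : h * e ∣ g := Nat.dvd_of_mul_dvd_mul_left hh <| by
    rwa [← mul_assoc, ← sq, ← hDe]
  obtain ⟨p, hp⟩ : h * e ∣ m := (Dvd.intro s hs.symm).trans (Nat.gcd_dvd_right M m)
  refine ⟨Matrix.det_inv_sqrt_smul_eq_one (Fintype.card_fin 2) (by exact_mod_cast hD) ?_,
    e, p, u, 1, s * v, he, Nat.dvd_div_of_mul_dvd (hDe ▸ hDM), ?_⟩
  · rw [Matrix.det_fin_two_of]
    exact_mod_cast (by linear_combination huv : (m : ℤ) * (g * v) - u * M = D)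
  · rw [hDe, hp, hs]
    push_cast
    simpa only [mul_one, mul_assoc] using
      inv_sqrt_sq_mul_smul_eq (h := h) (e := e) (by positivity) (by positivity) p u M (s * v)

/-- The generalized Atkin–Lehner involution
`W_m^M = (1/√D)·(m, u; M, gcd(M,m)·v)`, where `D = gcd(M, m²)` and
`gcd(M,m)·m·v - M·u = D`, lies in `Γ₀^{*,gcd(f,m)}(M)` (where `M = f²·M₀`, `M₀` squarefree). -/
theorem genAtkinLehner_mem_GammaStar (M M₀ f m : ℕ) (hM : 0 < M) (hm : 0 < m)
    (hMf : M = f ^ 2 * M₀) (hM₀ : Squarefree M₀)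
    (u v : ℤ) (huv : (Nat.gcd M m : ℤ) * m * v - (M : ℤ) * u = (Nat.gcd M (m ^ 2) : ℤ)) :
    ((Real.sqrt (Nat.gcd M (m ^ 2)))⁻¹ •
        !![(m : ℝ), (u : ℝ); (M : ℝ), (Nat.gcd M m : ℝ) * v]) ∈ GammaStar M (Nat.gcd f m) :=
  genAtkinLehner_mem_GammaStar_general M M₀ f m hM hMf hM₀ u v huv
end

section
/- Let M be a positive integer and let h, h' be positive integers with h² | M, h'² | M, and h | h'. Then Γ₀^{*,h}(M) ⊆ Γ₀^{*,h'}(M) and G₀^{*,h}(M) ⊆ G₀^{*,h'}(M). -/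
/-- `G₀^{*,h}(M)`: the same, but with `p, q, r, s ∈ ℤ_(M)`. -/
def GStar (M h : ℕ) : Set (Matrix (Fin 2) (Fin 2) ℝ) :=
  {W | W.det = 1 ∧ ∃ (e : ℕ) (p q r s : ℚ), 0 < e ∧ e ∣ M / h ^ 2 ∧
    inZM M p ∧ inZM M q ∧ inZM M r ∧ inZM M s ∧
    W = (Real.sqrt e)⁻¹ • !![(e : ℝ) * (p : ℝ), (q : ℝ) / h; (M : ℝ) * r / h, (e : ℝ) * s]}

/-!
Write `h' = g h` and `M / h² = e m`. The determinant condition reads `e·ps − m·qr = 1`, so `e` and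
`m` are coprime (over `ℤ_(M)` after clearing denominators prime to `M`). Hence `g² ∣ e m` splits
as `g = c d` with `c² ∣ m` and `d² ∣ e`, and scaling `p, q, r, s` by `d, c, c, d` presents the
matrix at level `h'` with `e' = e / d²`, which divides `M / h'² = (e / d²)(m / c²)`.
-/

namespace inZM

variable {M : ℕ} {x y : ℚ}

theorem intCast (M : ℕ) (n : ℤ) : inZM M n := ⟨n, 1, by simp, by simp⟩

theorem natCast (M n : ℕ) : inZM M n := by exact_mod_cast intCast M n

theorem mul (hx : inZM M x) (hy : inZM M y) : inZM M (x * y) := by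
  obtain ⟨a, b, hb, rfl⟩ := hx
  obtain ⟨c, d, hd, rfl⟩ := hy
  refine ⟨a * c, b * d, ?_, by push_cast; rw [div_mul_div_comm]⟩
  rw [← Int.isCoprime_iff_gcd_eq_one] at hb hd ⊢
  exact hb.mul_left hd

theorem exists_mul_eq_intCast (hx : inZM M x) :
    ∃ a b : ℤ, IsCoprime b M ∧ (b : ℚ) * x = a := by
  obtain ⟨a, b, hb, rfl⟩ := hx
  rcases eq_or_ne b 0 with rfl | hb0
  · exact ⟨0, 1, isCoprime_one_left, by simp⟩
  · exact ⟨a, b, Int.isCoprime_iff_gcd_eq_one.mpr hb, mul_div_cancel₀ _ (by exact_mod_cast hb0)⟩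

/-- Clearing denominators turns `e x - m y = 1` into `e a - m c = b` with `b` coprime to `M`;
as `e ∣ M`, a Bézout relation between `b` and `M` gives one between `e` and `m`. -/
theorem coprime_of_mul_sub_mul_eq_one {e m : ℕ} (he : e ∣ M) (hx : inZM M x) (hy : inZM M y)
    (h : e * x - m * y = 1) : e.Coprime m := by
  obtain ⟨a, b, hb, hbx⟩ := hx.exists_mul_eq_intCast
  obtain ⟨c, d, hd, hdy⟩ := hy.exists_mul_eq_intCast
  have hbd : b * d = e * (a * d) - m * (c * b) := by
    have : (b * d : ℚ) = e * (a * d) - m * (c * b) := by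
      rw [← hbx, ← hdy]; linear_combination (-(b * d : ℚ)) * h
    exact_mod_cast this
  obtain ⟨u, v, huv⟩ := hb.mul_left hd
  obtain ⟨k, hk⟩ := Int.natCast_dvd_natCast.mpr he
  exact Nat.isCoprime_iff_coprime.mp
    ⟨u * (a * d) + v * k, -(u * (c * b)), by linear_combination huv - u * hbd - v * hk⟩

end inZM

theorem Nat.Coprime.exists_eq_mul_sq_dvd_of_sq_dvd_mul {e m g : ℕ} (hem : e.Coprime m)
    (hg : g ^ 2 ∣ e * m) : ∃ c d, g = c * d ∧ c ^ 2 ∣ m ∧ d ^ 2 ∣ e := by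
  refine ⟨g.gcd m, g.gcd e, ?_, ?_, ?_⟩
  · rw [mul_comm, ← hem.gcd_mul g, Nat.gcd_eq_left ((dvd_pow_self g two_ne_zero).trans hg)]
  · have hcop : (g.gcd m ^ 2).Coprime e :=
      (hem.symm.coprime_dvd_left (Nat.gcd_dvd_right g m)).pow_left 2
    exact hcop.dvd_of_dvd_mul_left ((pow_dvd_pow_of_dvd (Nat.gcd_dvd_left g m) 2).trans hg)
  · have hcop : (g.gcd e ^ 2).Coprime m :=
      (hem.coprime_dvd_left (Nat.gcd_dvd_right g e)).pow_left 2
    exact hcop.dvd_of_dvd_mul_right ((pow_dvd_pow_of_dvd (Nat.gcd_dvd_left g e) 2).trans hg)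

theorem exists_eq_mul_sq_of_coprime {M h h' e m : ℕ} (hh' : h' ≠ 0) (hM : M = h ^ 2 * (e * m))
    (hcop : e.Coprime m) (hh'M : h' ^ 2 ∣ M) (hdvd : h ∣ h') :
    ∃ e' c d, e = e' * d ^ 2 ∧ h' = c * d * h ∧ e' ∣ M / h' ^ 2 := by
  obtain ⟨g, rfl⟩ := hdvd
  have hh : h ≠ 0 := left_ne_zero_of_mul hh'
  have hg : g ^ 2 ∣ e * m := by
    rw [hM, mul_pow] at hh'M
    exact Nat.dvd_of_mul_dvd_mul_left (by positivity) hh'M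
  obtain ⟨c, d, rfl, ⟨m', rfl⟩, ⟨e', rfl⟩⟩ := hcop.exists_eq_mul_sq_dvd_of_sq_dvd_mul hg
  refine ⟨e', c, d, by ring, by ring, ⟨m', ?_⟩⟩
  rw [hM, show h ^ 2 * (d ^ 2 * e' * (c ^ 2 * m')) = (h * (c * d)) ^ 2 * (e' * m') by ring,
    Nat.mul_div_cancel_left _ (by positivity)]

noncomputable def starMatrix (M h e : ℕ) (P Q R S : ℝ) : Matrix (Fin 2) (Fin 2) ℝ :=
  (Real.sqrt e)⁻¹ • !![(e : ℝ) * P, Q / h; (M : ℝ) * R / h, (e : ℝ) * S]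

theorem det_starMatrix {M h e m : ℕ} (hM : M = h ^ 2 * (e * m)) (hh : h ≠ 0) (he : e ≠ 0)
    (P Q R S : ℝ) : (starMatrix M h e P Q R S).det = e * (P * S) - m * (Q * R) := by
  have hs : Real.sqrt e ^ 2 = e := Real.sq_sqrt (Nat.cast_nonneg e)
  have hs0 : Real.sqrt e ≠ 0 := by positivity
  rw [starMatrix, Matrix.det_smul, Matrix.det_fin_two_of, Fintype.card_fin, hM]
  push_cast
  field_simp
  rw [hs]

theorem starMatrix_mul_sq (M h e' c d : ℕ) (hc : c ≠ 0) (P Q R S : ℝ) :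
    starMatrix M h (e' * d ^ 2) P Q R S
      = starMatrix M (c * d * h) e' (P * d) (Q * c) (R * c) (S * d) := by
  have hsq : Real.sqrt (e' * d ^ 2 : ℕ) = Real.sqrt e' * d := by
    push_cast
    rw [Real.sqrt_mul (by positivity), Real.sqrt_sq (by positivity)]
  unfold starMatrix
  rw [hsq]
  ext i j
  fin_cases i <;> fin_cases j <;> simp <;> field_simp

theorem exists_starMatrix_eq {M h h' e m : ℕ} (hh' : h' ≠ 0) (he : e ≠ 0)
    (hM : M = h ^ 2 * (e * m)) (hcop : e.Coprime m) (hh'M : h' ^ 2 ∣ M) (hdvd : h ∣ h') :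
    ∃ e' c d : ℕ, 0 < e' ∧ e' ∣ M / h' ^ 2 ∧ ∀ P Q R S : ℝ,
      starMatrix M h e P Q R S = starMatrix M h' e' (P * d) (Q * c) (R * c) (S * d) := by
  obtain ⟨e', c, d, rfl, rfl, he'⟩ := exists_eq_mul_sq_of_coprime hh' hM hcop hh'M hdvd
  exact ⟨e', c, d, Nat.pos_of_ne_zero (left_ne_zero_of_mul he), he',
    starMatrix_mul_sq M h e' c d (left_ne_zero_of_mul (left_ne_zero_of_mul hh'))⟩

theorem GammaStar_subset_of_dvd_general (M h h' : ℕ) (hh' : 0 < h')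
    (hhM : h ^ 2 ∣ M) (hh'M : h' ^ 2 ∣ M) (hdvd : h ∣ h') :
    GammaStar M h ⊆ GammaStar M h' ∧ GStar M h ⊆ GStar M h' := by
  have hh : h ≠ 0 := (Nat.pos_of_dvd_of_pos hdvd hh').ne'
  constructor
  · rintro W ⟨hdet, e, p, q, r, s, he, ⟨m, hm⟩, rfl⟩
    have hM : M = h ^ 2 * (e * m) := by rw [← hm, Nat.mul_div_cancel' hhM]
    have hdet' := (det_starMatrix hM hh he.ne' p q r s).symm.trans hdet
    have hps : (e : ℤ) * (p * s) - m * (q * r) = 1 := by exact_mod_cast hdet'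
    have hcop : e.Coprime m := Nat.isCoprime_iff_coprime.mp ⟨p * s, -(q * r), by linarith⟩
    obtain ⟨e', c, d, he', he'M, hW⟩ := exists_starMatrix_eq hh'.ne' he.ne' hM hcop hh'M hdvd
    exact ⟨hdet, e', p * d, q * c, r * c, s * d, he', he'M, by push_cast; exact hW p q r s⟩
  · rintro W ⟨hdet, e, p, q, r, s, he, ⟨m, hm⟩, hp, hq, hr, hs, rfl⟩
    have hM : M = h ^ 2 * (e * m) := by rw [← hm, Nat.mul_div_cancel' hhM]
    have hdet' := (det_starMatrix hM hh he.ne' p q r s).symm.trans hdet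
    have hcop : e.Coprime m := (hp.mul hs).coprime_of_mul_sub_mul_eq_one
      ⟨h ^ 2 * m, by rw [hM]; ring⟩ (hq.mul hr) (by exact_mod_cast hdet')
    obtain ⟨e', c, d, he', he'M, hW⟩ := exists_starMatrix_eq hh'.ne' he.ne' hM hcop hh'M hdvd
    exact ⟨hdet, e', p * d, q * c, r * c, s * d, he', he'M, hp.mul (.natCast M d),
      hq.mul (.natCast M c), hr.mul (.natCast M c), hs.mul (.natCast M d),
      by push_cast; exact hW p q r s⟩

/-- If `h ∣ h'` (with `h² ∣ M` and `h'² ∣ M`), then `Γ₀^{*,h}(M) ⊆ Γ₀^{*,h'}(M)` and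
`G₀^{*,h}(M) ⊆ G₀^{*,h'}(M)`. -/
theorem GammaStar_subset_of_dvd (M h h' : ℕ) (hM : 0 < M) (hh : 0 < h) (hh' : 0 < h')
    (hhM : h ^ 2 ∣ M) (hh'M : h' ^ 2 ∣ M) (hdvd : h ∣ h') :
    GammaStar M h ⊆ GammaStar M h' ∧ GStar M h ⊆ GStar M h' :=
  GammaStar_subset_of_dvd_general M h h' hh' hhM hh'M hdvd
end

section
/- For a positive integer M: (i) the greatest common divisor of the set {a − d : a, d ∈ ℤ, there exist b, c ∈ ℤ with (a b; c d) ∈ Γ₀(M)} (equivalently, of {a − d : a, d ∈ ℤ, ad ≡ 1 mod M}) equals gcd(M, 24); (ii) the greatest common divisor of {a − d : a, d ∈ ℤ, both a and d coprime to M} equals gcd(M, 2). Consequently Γ₀(M) = Γ₀^{(M')}(M) where M' := gcd(M, 24). -/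
/-!
Modulo any divisor of `24` every unit is its own inverse, so `ad ≡ 1 (mod M)` forces
`a ≡ d (mod gcd(M, 24))`; membership in `Γ₀(M)` gives `ad ≡ 1 (mod M)`, and conversely
`ad - kM = 1` is the determinant of `(a k; M d)`. If `n` divides every such `a - d`, then
`n ∣ M` (take `a = M + 1`, `d = 1`), and `n ∣ x² - 1` for every `x` prime to `M` (take
`d = x⁻¹ mod M`). Since units modulo divisors of `M` lift to integers prime to `M`, every unit
modulo a divisor of `n` squares to `1`: this rules out `5 ∣ n` (as `2² ≠ 1` mod `5`), and then
`5² ≡ 1 (mod n)`. For (ii), `M + 1` and `M - 1` are both prime to `M`, while numbers prime to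
an even `M` are odd.
-/

namespace ZMod

theorem eq_of_mul_eq_one_of_dvd_24 {g : ℕ} (hg : g ∣ 24) {a d : ZMod g} (h : a * d = 1) :
    a = d := by
  have hg' : g ∈ ({1, 2, 3, 4, 6, 8, 12, 24} : Finset ℕ) :=
    (show Nat.divisors 24 = {1, 2, 3, 4, 6, 8, 12, 24} by decide) ▸
      Nat.mem_divisors.2 ⟨hg, by norm_num⟩
  simp only [Finset.mem_insert, Finset.mem_singleton] at hg'
  revert a d
  rcases hg' with rfl | rfl | rfl | rfl | rfl | rfl | rfl | rfl <;> decide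

theorem exists_isCoprime_intCast_eq {q M : ℕ} [NeZero M] (hq : q ∣ M) (u : (ZMod q)ˣ) :
    ∃ x : ℤ, IsCoprime x M ∧ (x : ZMod q) = u := by
  obtain ⟨v, rfl⟩ := unitsMap_surjective hq u
  refine ⟨((v : ZMod M).val : ℤ), Nat.isCoprime_iff_coprime.2 (val_coe_unit_coprime v), ?_⟩
  rw [Int.cast_natCast, natCast_val, unitsMap_val]

end ZMod

theorem Int.ModEq.gcd_24_of_mul_modEq_one {M : ℕ} {a d : ℤ} (h : a * d ≡ 1 [ZMOD M]) :
    a ≡ d [ZMOD (Nat.gcd M 24 : ℤ)] := by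
  have h' := h.of_dvd (Int.natCast_dvd_natCast.2 (Nat.gcd_dvd_left M 24))
  rw [← ZMod.intCast_eq_intCast_iff] at h' ⊢
  push_cast at h'
  exact ZMod.eq_of_mul_eq_one_of_dvd_24 (Nat.gcd_dvd_right M 24) h'

theorem Nat.dvd_24_of_forall_units_sq_eq_one {m : ℕ}
    (h : ∀ q, q ∣ m → ∀ u : (ZMod q)ˣ, u ^ 2 = 1) : m ∣ 24 := by
  have h5 : ¬ 5 ∣ m := fun h5 => by
    have := congrArg Units.val (h 5 h5 (ZMod.unitOfCoprime 2 (by norm_num)))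
    revert this
    decide
  have hcop : Nat.Coprime 5 m := (Nat.Prime.coprime_iff_not_dvd (by norm_num)).2 h5
  have h25 := congrArg Units.val (h m dvd_rfl (ZMod.unitOfCoprime 5 hcop))
  simp only [Units.val_pow_eq_pow_val, ZMod.coe_unitOfCoprime, Units.val_one] at h25
  rw [← ZMod.natCast_eq_zero_iff]
  push_cast
  linear_combination h25

theorem units_sq_eq_one_of_forall_isCoprime_dvd {q M : ℕ} [NeZero M] (hq : q ∣ M)
    (H : ∀ x : ℤ, IsCoprime x M → (q : ℤ) ∣ x ^ 2 - 1) (u : (ZMod q)ˣ) : u ^ 2 = 1 := by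
  obtain ⟨x, hx, hxu⟩ := ZMod.exists_isCoprime_intCast_eq hq u
  have hsq := (ZMod.intCast_zmod_eq_zero_iff_dvd _ q).2 (H x hx)
  push_cast at hsq
  ext
  rw [Units.val_pow_eq_pow_val, Units.val_one, ← hxu]
  linear_combination hsq

theorem dvd_sq_sub_one_of_isCoprime {M n : ℤ} (hnM : n ∣ M)
    (H : ∀ a d : ℤ, a * d ≡ 1 [ZMOD M] → n ∣ a - d) {x : ℤ} (hx : IsCoprime x M) :
    n ∣ x ^ 2 - 1 := by
  obtain ⟨y, k, hyk⟩ := hx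
  have hxy : x * y ≡ 1 [ZMOD M] := Int.modEq_iff_dvd.2 ⟨k, by linear_combination -hyk⟩
  have hM : n ∣ x * y - 1 := hnM.trans ⟨-k, by linear_combination hyk⟩
  have hsq : x ^ 2 - 1 = x * (x - y) + (x * y - 1) := by ring
  rw [hsq]
  exact dvd_add (dvd_mul_of_dvd_right (H x y hxy) x) hM

theorem forall_mul_modEq_one_dvd_sub_iff {M : ℕ} (hM : M ≠ 0) (n : ℤ) :
    (∀ a d : ℤ, a * d ≡ 1 [ZMOD M] → n ∣ a - d) ↔ n ∣ (Nat.gcd M 24 : ℤ) := by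
  refine ⟨fun H => ?_, fun hn a d h => hn.trans h.gcd_24_of_mul_modEq_one.symm.dvd⟩
  have : NeZero M := ⟨hM⟩
  have hnM : n ∣ M := by simpa using H (M + 1) 1 (Int.modEq_iff_dvd.2 ⟨-1, by ring⟩)
  have hn24 : n.natAbs ∣ 24 := Nat.dvd_24_of_forall_units_sq_eq_one fun q hq =>
    units_sq_eq_one_of_forall_isCoprime_dvd (hq.trans (Int.dvd_natCast.1 hnM)) fun x hx =>
      (Int.natCast_dvd.2 hq).trans (dvd_sq_sub_one_of_isCoprime hnM H hx)
  rw [← Int.gcd_natCast_natCast]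
  exact Int.dvd_coe_gcd hnM (Int.dvd_natCast.2 hn24)

theorem forall_coprime_dvd_sub_iff (M : ℕ) (n : ℤ) :
    (∀ a d : ℤ, Int.gcd a M = 1 → Int.gcd d M = 1 → n ∣ a - d) ↔
      n ∣ (Nat.gcd M 2 : ℤ) := by
  simp only [← Int.isCoprime_iff_gcd_eq_one]
  constructor
  · intro H
    have hsucc : IsCoprime ((M : ℤ) + 1) M := ⟨1, -1, by ring⟩
    have hpred : IsCoprime ((M : ℤ) - 1) M := ⟨-1, 1, by ring⟩
    have hnM : n ∣ M := by simpa using H _ _ hsucc isCoprime_one_left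
    have hn2 : n ∣ 2 := by simpa [add_sub_sub_cancel, one_add_one_eq_two] using H _ _ hsucc hpred
    rw [← Int.gcd_natCast_natCast]
    exact Int.dvd_coe_gcd hnM hn2
  · intro hn a d ha hd
    refine hn.trans ?_
    rcases (Nat.dvd_prime Nat.prime_two).1 (Nat.gcd_dvd_right M 2) with hg | hg
    · simp [hg]
    · have h2M : (2 : ℤ) ∣ M := by exact_mod_cast hg ▸ Nat.gcd_dvd_left M 2
      rw [hg, Nat.cast_ofNat, ← even_iff_two_dvd]
      exact (Int.isCoprime_two_right.1 (ha.of_isCoprime_of_dvd_right h2M)).sub_odd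
        (Int.isCoprime_two_right.1 (hd.of_isCoprime_of_dvd_right h2M))

/-- Lemma `lem:e(M)`: (i) the gcd of all `a - d` over matrices `(a b; c d) ∈ Γ₀(M)`
(equivalently, over all `a, d` with `ad ≡ 1 (mod M)`) is `gcd(M, 24)`;
(ii) the gcd of all `a - d` with `a, d` coprime to `M` is `gcd(M, 2)`.
Consequently `Γ₀(M) = Γ₀^{(M')}(M)` for `M' = gcd(M, 24)`, i.e. every
`(a b; c d) ∈ Γ₀(M)` satisfies `a ≡ d (mod gcd(M, 24))`. -/
theorem gcd_diag_diff_Gamma0 (M : ℕ) (hM : 0 < M) :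
    (∀ n : ℤ,
      (∀ a b c d : ℤ, a * d - b * c = 1 → (M : ℤ) ∣ c → n ∣ a - d) ↔
        n ∣ (Nat.gcd M 24 : ℤ)) ∧
    (∀ n : ℤ,
      (∀ a d : ℤ, a * d ≡ 1 [ZMOD (M : ℤ)] → n ∣ a - d) ↔ n ∣ (Nat.gcd M 24 : ℤ)) ∧
    (∀ n : ℤ,
      (∀ a d : ℤ, Int.gcd a M = 1 → Int.gcd d M = 1 → n ∣ a - d) ↔
        n ∣ (Nat.gcd M 2 : ℤ)) ∧
    (∀ a b c d : ℤ, a * d - b * c = 1 → (M : ℤ) ∣ c →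
      a ≡ d [ZMOD (Nat.gcd M 24 : ℤ)]) := by
  have modEq_of_det : ∀ a b c d : ℤ, a * d - b * c = 1 → (M : ℤ) ∣ c →
      a * d ≡ 1 [ZMOD M] := fun a b c d hdet ⟨k, hk⟩ =>
    Int.modEq_iff_dvd.2 ⟨-(b * k), by linear_combination -hdet - b * hk⟩
  refine ⟨fun n => ?_, forall_mul_modEq_one_dvd_sub_iff hM.ne', forall_coprime_dvd_sub_iff M,
    fun a b c d hdet hc => (modEq_of_det a b c d hdet hc).gcd_24_of_mul_modEq_one⟩
  rw [← forall_mul_modEq_one_dvd_sub_iff hM.ne']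
  refine ⟨fun H a d had => ?_, fun H a b c d hdet hc => H a d (modEq_of_det a b c d hdet hc)⟩
  obtain ⟨k, hk⟩ := Int.modEq_iff_dvd.1 had.symm
  exact H a k M d (by linear_combination hk) dvd_rfl
end
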